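/- arXiv:2602.17230 — 5 statements merged into one kernel-verified Lean document; each statement's English description precedes it below -/
import Mathlib

section
/- For every integer k ≥ 1, setting μ = 15 + 2k, the following inequality of rational numbers holds: (7/8 − 3/2)² + (9/8 − 3/2)² + 2·(11/8 − 3/2)² + 2·(13/8 − 3/2)² + (15/8 − 3/2)² + (17/8 − 3/2)² + ∑_{l=1}^{2k+7} ((l + 2k + 8)/(2(k+4)) − 3/2)² ≤ (μ/12)·(17/8 − 7/8). -/
/-!
With `m = k + 4` the `l`-th summand is `((l - m) / (2m))²`, and `l` runs over `1, …, 2m - 1`,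
symmetrically about `m`, so the sum is `(m - 1)(2m - 1) / (12m)`. The six explicit terms add up
to `9/8`, and the right-hand side minus the left-hand side is `(2m + 1)(m - 4) / (48m) ≥ 0`.
-/

open Finset

theorem sum_Icc_sub_sq {K : Type*} [Field K] [CharZero K] (c : K) (n : ℕ) :
    ∑ l ∈ Icc 1 n, ((l : K) - c) ^ 2
      = (n : K) * (n + 1) * (2 * n + 1) / 6 - c * n * (n + 1) + n * c ^ 2 := by
  induction n with
  | zero => simp
  | succ n ih =>
    rw [sum_Icc_succ_top (by omega), ih]
    push_cast
    ring

theorem sum_Icc_div_sub_three_halves_sq (k : ℕ) :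
    ∑ l ∈ Icc 1 (2 * k + 7), (((l : ℚ) + 2 * (k : ℚ) + 8) / (2 * ((k : ℚ) + 4)) - 3/2) ^ 2
      = ((k : ℚ) + 3) * (2 * k + 7) / (12 * (k + 4)) := by
  have hm : (k : ℚ) + 4 ≠ 0 := by positivity
  have hterm : ∀ l : ℕ, (((l : ℚ) + 2 * k + 8) / (2 * (k + 4)) - 3/2) ^ 2
      = ((l : ℚ) - (k + 4)) ^ 2 / (2 * (k + 4)) ^ 2 := by
    intro l
    field_simp
    ring
  rw [sum_congr rfl fun l _ => hterm l, ← sum_div, sum_Icc_sub_sq]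
  push_cast
  field_simp
  ring

theorem stmt_4_general (k : ℕ) :
    ((7/8 : ℚ) - 3/2) ^ 2 +
      ((9/8 : ℚ) - 3/2) ^ 2 +
      2 * ((11/8 : ℚ) - 3/2) ^ 2 +
      2 * ((13/8 : ℚ) - 3/2) ^ 2 +
      ((15/8 : ℚ) - 3/2) ^ 2 +
      ((17/8 : ℚ) - 3/2) ^ 2 +
      ∑ l ∈ Finset.Icc 1 (2 * k + 7), (((l : ℚ) + 2 * (k : ℚ) + 8) / (2 * ((k : ℚ) + 4)) - 3/2) ^ 2
    ≤ ((15 + 2 * (k : ℚ)) / 12) * (17/8 - 7/8) := by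
  have hm : (k : ℚ) + 4 ≠ 0 := by positivity
  rw [sum_Icc_div_sub_three_halves_sq]
  calc _ = ((15 + 2 * (k : ℚ)) / 12) * (17/8 - 7/8) - k * (2 * k + 9) / (48 * (k + 4)) := by
        field_simp
        ring
    _ ≤ _ := sub_le_self _ (by positivity)

theorem stmt_4 (k : ℕ) (hk : 1 ≤ k) :
    ((7/8 : ℚ) - 3/2) ^ 2 +
      ((9/8 : ℚ) - 3/2) ^ 2 +
      2 * ((11/8 : ℚ) - 3/2) ^ 2 +
      2 * ((13/8 : ℚ) - 3/2) ^ 2 +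
      ((15/8 : ℚ) - 3/2) ^ 2 +
      ((17/8 : ℚ) - 3/2) ^ 2 +
      ∑ l ∈ Finset.Icc 1 (2 * k + 7), (((l : ℚ) + 2 * (k : ℚ) + 8) / (2 * ((k : ℚ) + 4)) - 3/2) ^ 2
    ≤ ((15 + 2 * (k : ℚ)) / 12) * (17/8 - 7/8) :=
  stmt_4_general k
end

section
/- For every integer k ≥ 0, setting μ = 19 + 2k, the following inequality of rational numbers holds: (19/22 − 3/2)² + (23/22 − 3/2)² + (27/22 − 3/2)² + (29/22 − 3/2)² + (31/22 − 3/2)² + (3/2 − 3/2)² + (35/22 − 3/2)² + (37/22 − 3/2)² + (39/22 − 3/2)² + (43/22 − 3/2)² + (47/22 − 3/2)² + ∑_{l=1}^{2k+8} ((l + 2k + 9)/(2k+9) − 3/2)² ≤ (μ/12)·(47/22 − 19/22). -/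
/-!
Writing `m = 2k + 9`, the spectrum consists of eleven fixed numbers, whose squared deviations
from `3/2` add up to `16/11`, together with the numbers `1 + l/m` for `1 ≤ l ≤ m - 1`. The latter
are symmetric about `3/2`, and their squared deviations add up to `(m - 1)(m - 2)/(12 m)`
by the formulas for `∑ l` and `∑ l²`. After clearing denominators the inequality becomes
`0 ≤ 6k² + 35k + 25`.
-/

open Finset

theorem sum_Icc_mul_sub_half_sq {K : Type*} [Field K] [CharZero K] (x : K) (n : ℕ) :
    ∑ l ∈ Icc 1 n, ((l : K) * x - 1 / 2) ^ 2
      = (n : K) * (n + 1) * (2 * n + 1) / 6 * x ^ 2 - (n : K) * (n + 1) / 2 * x + (n : K) / 4 := by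
  induction n with
  | zero => simp
  | succ n ih =>
    rw [sum_Icc_succ_top (by omega), ih]
    push_cast
    ring

theorem sum_Icc_div_succ_sub_half_sq {K : Type*} [Field K] [CharZero K] (n : ℕ) :
    ∑ l ∈ Icc 1 n, ((l : K) / (n + 1) - 1 / 2) ^ 2 = (n : K) * (n - 1) / (12 * (n + 1)) := by
  simp_rw [div_eq_mul_inv _ ((n : K) + 1), sum_Icc_mul_sub_half_sq]
  have := Nat.cast_add_one_ne_zero (R := K) n
  field_simp
  ring

theorem stmt_13 (k : ℕ) :
    ((19/22 : ℚ) - 3/2) ^ 2 +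
      ((23/22 : ℚ) - 3/2) ^ 2 +
      ((27/22 : ℚ) - 3/2) ^ 2 +
      ((29/22 : ℚ) - 3/2) ^ 2 +
      ((31/22 : ℚ) - 3/2) ^ 2 +
      ((3/2 : ℚ) - 3/2) ^ 2 +
      ((35/22 : ℚ) - 3/2) ^ 2 +
      ((37/22 : ℚ) - 3/2) ^ 2 +
      ((39/22 : ℚ) - 3/2) ^ 2 +
      ((43/22 : ℚ) - 3/2) ^ 2 +
      ((47/22 : ℚ) - 3/2) ^ 2 +
      ∑ l ∈ Finset.Icc 1 (2 * k + 8), (((l : ℚ) + 2 * (k : ℚ) + 9) / (2 * (k : ℚ) + 9) - 3/2) ^ 2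
    ≤ ((19 + 2 * (k : ℚ)) / 12) * (47/22 - 19/22) := by
  have hm : 2 * (k : ℚ) + 9 = ((2 * k + 8 : ℕ) : ℚ) + 1 := by push_cast; ring
  have hm0 : 2 * (k : ℚ) + 9 ≠ 0 := by positivity
  have hsum : ∑ l ∈ Icc 1 (2 * k + 8), (((l : ℚ) + 2 * k + 9) / (2 * k + 9) - 3 / 2) ^ 2
      = (2 * (k : ℚ) + 8) * (2 * k + 7) / (12 * (2 * k + 9)) := by
    calc ∑ l ∈ Icc 1 (2 * k + 8), (((l : ℚ) + 2 * k + 9) / (2 * k + 9) - 3 / 2) ^ 2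
        = ∑ l ∈ Icc 1 (2 * k + 8), ((l : ℚ) / (((2 * k + 8 : ℕ) : ℚ) + 1) - 1 / 2) ^ 2 := by
          refine sum_congr rfl fun l _ => ?_
          rw [← hm]
          field_simp
          ring
      _ = (2 * (k : ℚ) + 8) * (2 * k + 7) / (12 * (2 * k + 9)) := by
          rw [sum_Icc_div_succ_sub_half_sq, ← hm]
          push_cast
          ring
  have hgap : (19 + 2 * (k : ℚ)) / 12 * (14 / 11)
      - (16 / 11 + (2 * k + 8) * (2 * k + 7) / (12 * (2 * k + 9)))
      = (6 * k ^ 2 + 35 * k + 25) / (66 * (2 * k + 9)) := by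
    field_simp
    ring
  rw [hsum]
  norm_num
  rw [← sub_nonneg, hgap]
  positivity
end

section
/- For every integer k ≥ 0, setting μ = 20 + 2k, the following inequality of rational numbers holds: (31/36 − 3/2)² + (37/36 − 3/2)² + (43/36 − 3/2)² + (47/36 − 3/2)² + (49/36 − 3/2)² + (53/36 − 3/2)² + (55/36 − 3/2)² + (59/36 − 3/2)² + (61/36 − 3/2)² + (65/36 − 3/2)² + (71/36 − 3/2)² + (77/36 − 3/2)² + ∑_{l=1}^{2k+8} ((l + 2k + 9)/(2k+9) − 3/2)² ≤ (μ/12)·(77/36 − 31/36). -/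
/-!
The twelve exceptional spectrum numbers are symmetric about `3/2` and contribute `169/108`;
the remaining ones are `1 + l/(n+1)` for `1 ≤ l ≤ n = 2k+8`, whose squared deviations from `3/2`
sum to the variance of the uniform distribution on `{1, …, n}` rescaled, i.e. `n(n-1)/(12(n+1))`.
The difference between the two sides is then `(10k² + 59k + 45) / (108(2k+9)) ≥ 0`.
-/

open Finset

section

variable {K : Type*} [Field K] [CharZero K]

theorem sum_Icc_sq_sub (c : K) (n : ℕ) :
    ∑ l ∈ Icc 1 n, ((l : K) - c) ^ 2 =
      n * (n + 1) * (2 * n + 1) / 6 - c * n * (n + 1) + n * c ^ 2 := by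
  induction n with
  | zero => simp
  | succ m ih =>
    rw [sum_Icc_succ_top (by omega), ih]
    push_cast
    ring

theorem sum_Icc_sq_div_succ_sub_half (n : ℕ) :
    ∑ l ∈ Icc 1 n, ((l : K) / (n + 1) - 1 / 2) ^ 2 = (n : K) * (n - 1) / (12 * (n + 1)) := by
  calc ∑ l ∈ Icc 1 n, ((l : K) / (n + 1) - 1 / 2) ^ 2
      = (∑ l ∈ Icc 1 n, ((l : K) - (n + 1) / 2) ^ 2) / ((n : K) + 1) ^ 2 := by
        rw [sum_div]
        refine sum_congr rfl fun l _ => ?_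
        field_simp
    _ = (n : K) * (n - 1) / (12 * (n + 1)) := by
        rw [sum_Icc_sq_sub]
        field_simp
        ring

end

theorem stmt_15 (k : ℕ) :
    ((31/36 : ℚ) - 3/2) ^ 2 +
      ((37/36 : ℚ) - 3/2) ^ 2 +
      ((43/36 : ℚ) - 3/2) ^ 2 +
      ((47/36 : ℚ) - 3/2) ^ 2 +
      ((49/36 : ℚ) - 3/2) ^ 2 +
      ((53/36 : ℚ) - 3/2) ^ 2 +
      ((55/36 : ℚ) - 3/2) ^ 2 +
      ((59/36 : ℚ) - 3/2) ^ 2 +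
      ((61/36 : ℚ) - 3/2) ^ 2 +
      ((65/36 : ℚ) - 3/2) ^ 2 +
      ((71/36 : ℚ) - 3/2) ^ 2 +
      ((77/36 : ℚ) - 3/2) ^ 2 +
      ∑ l ∈ Finset.Icc 1 (2 * k + 8), (((l : ℚ) + 2 * (k : ℚ) + 9) / (2 * (k : ℚ) + 9) - 3/2) ^ 2
    ≤ ((20 + 2 * (k : ℚ)) / 12) * (77/36 - 31/36) := by
  have hd : (2 * (k : ℚ) + 9) = ((2 * k + 8 : ℕ) : ℚ) + 1 := by push_cast; ring
  have hshift : ∀ l : ℕ, ((l : ℚ) + 2 * k + 9) / (2 * k + 9) - 3 / 2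
      = (l : ℚ) / (((2 * k + 8 : ℕ) : ℚ) + 1) - 1 / 2 := fun l => by
    rw [← hd]
    field_simp
    ring
  simp only [hshift, sum_Icc_sq_div_succ_sub_half]
  have hgap : 0 ≤ (10 * (k : ℚ) ^ 2 + 59 * k + 45) / (108 * (2 * k + 9)) := by positivity
  rw [← sub_nonneg]
  convert hgap using 1
  push_cast
  field_simp
  ring
end

section
/- Let p ≥ 2 be an even integer and set τ = 15 + p. Consider the τ rational numbers consisting of 17/18, 23/18, 25/18, 29/18, 31/18 together with 1 + (2k−1)/(2(p+9)) for 1 ≤ k ≤ p/2 + 5 and 2 − (2k−1)/(2(p+9)) for 1 ≤ k ≤ p/2 + 5. Let x̄ be their average (equal to (395 + 27p)/(270 + 18p)). Then the sum of (x − x̄)² over these τ numbers is at most (τ/12)·( (2 − 1/(2(p+9))) − 17/18 ). -/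
/-!
Write `N = p + 9` and `n = p/2 + 5`, so that `2n = N + 1`. The two families of exponents are
mirror images of each other about `3/2`: the `k`-th ones are `3/2 ± (k - n)/N`. Pairing them kills
the cross terms, and the sum of their squared deviations from any `c` is
`∑ 2((k - n)/N)² + 2n(3/2 - c)² = n(n - 1)/(3N) + 2n(3/2 - c)²`. What is left is an explicit
rational function of `p`, and the difference of the two sides equals
`(N² - 36)/(216N) + 35/648 + 25/(81(p + 15))`, which is positive as soon as `N ≥ 6`.
-/

open Finset

theorem sum_Icc_natCast_add_sq (c : ℚ) (n : ℕ) :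
    ∑ k ∈ Icc 1 n, ((k : ℚ) + c) ^ 2 = n * c ^ 2 + c * n * (n + 1) + n * (n + 1) * (2 * n + 1) / 6 := by
  induction n with
  | zero => simp
  | succ n ih =>
    rw [sum_Icc_succ_top (Nat.le_add_left 1 n), ih]
    push_cast
    ring

theorem sum_Icc_natCast_sub_sq (n : ℕ) :
    ∑ k ∈ Icc 1 n, ((k : ℚ) - n) ^ 2 = n * (n - 1) * (2 * n - 1) / 6 := by
  simp only [sub_eq_add_neg, sum_Icc_natCast_add_sq]
  ring

theorem sum_Icc_symmetric_pair_sq_sub (n : ℕ) (N c : ℚ) (hN : N = 2 * n - 1) :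
    ∑ k ∈ Icc 1 n, ((1 + (2 * (k : ℚ) - 1) / (2 * N) - c) ^ 2 + (2 - (2 * (k : ℚ) - 1) / (2 * N) - c) ^ 2)
      = n * (n - 1) / (3 * N) + 2 * n * (3 / 2 - c) ^ 2 := by
  have hN0 : N ≠ 0 := by
    rintro rfl
    have h : ((2 * n : ℕ) : ℚ) = 1 := by push_cast; linarith
    norm_cast at h
    omega
  have hpair : ∀ k ∈ Icc 1 n,
      (1 + (2 * (k : ℚ) - 1) / (2 * N) - c) ^ 2 + (2 - (2 * (k : ℚ) - 1) / (2 * N) - c) ^ 2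
        = 2 / N ^ 2 * ((k : ℚ) - n) ^ 2 + 2 * (3 / 2 - c) ^ 2 := by
    intro k _
    subst hN
    field_simp
    ring
  rw [sum_congr rfl hpair, sum_add_distrib, ← mul_sum, sum_Icc_natCast_sub_sq, sum_const,
    Nat.card_Icc, nsmul_eq_mul, ← hN]
  field_simp
  push_cast
  ring

theorem hertling_J3p_reduced (p n : ℚ) (hp : 0 ≤ p) (hn : 2 * n = p + 10) :
    let xbar := (395 + 27 * p) / (270 + 18 * p)
    (17/18 - xbar) ^ 2 + (23/18 - xbar) ^ 2 + (25/18 - xbar) ^ 2 + (29/18 - xbar) ^ 2 +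
        (31/18 - xbar) ^ 2 + (n * (n - 1) / (3 * (p + 9)) + 2 * n * (3 / 2 - xbar) ^ 2)
      ≤ (15 + p) / 12 * ((2 - 1 / (2 * (p + 9))) - 17/18) := by
  intro xbar
  obtain rfl : n = (p + 10) / 2 := by linarith
  have h9 : 0 < p + 9 := by linarith
  have h15 : 0 < p + 15 := by linarith
  have hdiff : (15 + p) / 12 * ((2 - 1 / (2 * (p + 9))) - 17/18)
      - ((17/18 - xbar) ^ 2 + (23/18 - xbar) ^ 2 + (25/18 - xbar) ^ 2 + (29/18 - xbar) ^ 2 +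
        (31/18 - xbar) ^ 2 + ((p + 10) / 2 * ((p + 10) / 2 - 1) / (3 * (p + 9))
          + 2 * ((p + 10) / 2) * (3 / 2 - xbar) ^ 2))
      = ((p + 9) ^ 2 - 36) / (216 * (p + 9)) + 35 / 648 + 25 / (81 * (p + 15)) := by
    simp only [xbar]
    field_simp
    ring
  rw [← sub_nonneg, hdiff]
  have hsq : 0 ≤ (p + 9) ^ 2 - 36 := by nlinarith
  positivity

theorem stmt_17_general (p : ℕ) (hpe : Even p)
    (τ : ℚ) (hτ : τ = 15 + (p : ℚ))
    (xbar : ℚ) (hxbar : xbar = (395 + 27 * (p : ℚ)) / (270 + 18 * (p : ℚ))) :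
    ((17/18 : ℚ) - xbar) ^ 2 + ((23/18 : ℚ) - xbar) ^ 2 + ((25/18 : ℚ) - xbar) ^ 2 +
      ((29/18 : ℚ) - xbar) ^ 2 + ((31/18 : ℚ) - xbar) ^ 2 +
      ∑ k ∈ Finset.Icc 1 (p / 2 + 5),
        ((1 + (2 * (k : ℚ) - 1) / (2 * ((p : ℚ) + 9))) - xbar) ^ 2 +
      ∑ k ∈ Finset.Icc 1 (p / 2 + 5),
        ((2 - (2 * (k : ℚ) - 1) / (2 * ((p : ℚ) + 9))) - xbar) ^ 2
    ≤ (τ / 12) * ((2 - 1 / (2 * ((p : ℚ) + 9))) - 17/18) := by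
  obtain ⟨m, rfl⟩ := hpe
  have hn : (((m + m) / 2 + 5 : ℕ) : ℚ) * 2 = (m + m : ℕ) + 10 := by
    rw [show (m + m) / 2 = m by omega]
    push_cast
    ring
  subst hτ hxbar
  rw [add_assoc _ (∑ k ∈ _, _), ← sum_add_distrib,
    sum_Icc_symmetric_pair_sq_sub _ _ _ (by linarith)]
  exact hertling_J3p_reduced _ _ (Nat.cast_nonneg _) (by linarith)

/-- Generalized Hertling inequality for the Tjurina spectrum of `J_{3,p}` (`p` even). -/
theorem stmt_17 (p : ℕ) (hp : 2 ≤ p) (hpe : Even p)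
    (τ : ℚ) (hτ : τ = 15 + (p : ℚ))
    (xbar : ℚ) (hxbar : xbar = (395 + 27 * (p : ℚ)) / (270 + 18 * (p : ℚ))) :
    ((17/18 : ℚ) - xbar) ^ 2 + ((23/18 : ℚ) - xbar) ^ 2 + ((25/18 : ℚ) - xbar) ^ 2 +
      ((29/18 : ℚ) - xbar) ^ 2 + ((31/18 : ℚ) - xbar) ^ 2 +
      ∑ k ∈ Finset.Icc 1 (p / 2 + 5),
        ((1 + (2 * (k : ℚ) - 1) / (2 * ((p : ℚ) + 9))) - xbar) ^ 2 +
      ∑ k ∈ Finset.Icc 1 (p / 2 + 5),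
        ((2 - (2 * (k : ℚ) - 1) / (2 * ((p : ℚ) + 9))) - xbar) ^ 2
    ≤ (τ / 12) * ((2 - 1 / (2 * ((p : ℚ) + 9))) - 17/18) :=
  stmt_17_general p hpe τ hτ xbar hxbar
end

section
/- Let p ≥ 2 be an even integer and set τ = 13 + p. Consider the τ rational numbers consisting of 8/9, 11/9, 13/9, 14/9, 16/9 together with 1 + k/(p+9) for 1 ≤ k ≤ p/2 + 4 and 2 − k/(p+9) for 1 ≤ k ≤ p/2 + 4. Let x̄ be their average (equal to (340 + 27p)/(234 + 18p)). Then the sum of (x − x̄)² over these τ numbers is at most (τ/12)·( (2 − 1/(p+9)) − 8/9 ). -/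
/-!
The numbers `1 + k/(p+9)` and `2 - k/(p+9)` are mirror images about `3/2`, so each pair
contributes `2 (k/(p+9) - 1/2)² + 2 (3/2 - x̄)²`. With `p = 2m` the offsets `k/(2m+9) - 1/2`
are `-(2j+1)/(2(2m+9))` for `j < m+4`, whose squares sum to a closed form. The inequality then
becomes one between rational functions of `m`, and after clearing denominators the difference
is a polynomial in `m` with positive coefficients.
-/

open Finset

section

variable {K : Type*} [Field K] [CharZero K]

theorem sum_Icc_add_mul_sq (a c : K) (n : ℕ) :
    ∑ k ∈ Icc 1 n, (a + k * c) ^ 2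
      = n * a ^ 2 + a * c * n * (n + 1) + c ^ 2 * (n * (n + 1) * (2 * n + 1)) / 6 := by
  induction n with
  | zero => simp
  | succ n ih =>
    rw [sum_Icc_succ_top (by omega), ih]
    push_cast
    ring

theorem sum_Icc_div_sub_half_sq (n : ℕ) :
    ∑ k ∈ Icc 1 n, ((k : K) / (2 * n + 1) - 1 / 2) ^ 2
      = (n : K) * (2 * n - 1) / (12 * (2 * n + 1)) := by
  have hterm (k : ℕ) : (k : K) / (2 * n + 1) - 1 / 2 = -(1 / 2) + k * (2 * (n : K) + 1)⁻¹ := by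
    ring
  simp only [hterm, sum_Icc_add_mul_sq]
  have hN : (2 * n + 1 : K) ≠ 0 := by exact_mod_cast (2 * n).succ_ne_zero
  generalize hNdef : (2 * n + 1 : K) = N at hN ⊢
  rw [show (n : K) = (N - 1) / 2 by rw [← hNdef]; ring]
  field_simp
  ring

end

theorem sum_sq_center_add_add_sum_sq_center_sub {R ι : Type*} [CommRing R] (s : Finset ι)
    (f : ι → R) (c x : R) :
    ∑ i ∈ s, (c + f i - x) ^ 2 + ∑ i ∈ s, (c - f i - x) ^ 2
      = 2 * ∑ i ∈ s, f i ^ 2 + 2 * #s * (c - x) ^ 2 := by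
  calc _ = ∑ i ∈ s, (2 * f i ^ 2 + 2 * (c - x) ^ 2) := by
        rw [← sum_add_distrib]
        exact sum_congr rfl fun i _ => by ring
    _ = _ := by rw [sum_add_distrib, ← mul_sum, sum_const, nsmul_eq_mul]; ring

theorem stmt_19_general (p : ℕ) (hpe : Even p)
    (τ : ℚ) (hτ : τ = 13 + (p : ℚ))
    (xbar : ℚ) (hxbar : xbar = (340 + 27 * (p : ℚ)) / (234 + 18 * (p : ℚ))) :
    ((8/9 : ℚ) - xbar) ^ 2 + ((11/9 : ℚ) - xbar) ^ 2 + ((13/9 : ℚ) - xbar) ^ 2 +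
      ((14/9 : ℚ) - xbar) ^ 2 + ((16/9 : ℚ) - xbar) ^ 2 +
      ∑ k ∈ Finset.Icc 1 (p / 2 + 4),
        ((1 + (k : ℚ) / ((p : ℚ) + 9)) - xbar) ^ 2 +
      ∑ k ∈ Finset.Icc 1 (p / 2 + 4),
        ((2 - (k : ℚ) / ((p : ℚ) + 9)) - xbar) ^ 2
    ≤ (τ / 12) * ((2 - 1 / ((p : ℚ) + 9)) - 8/9) := by
  obtain ⟨m, rfl⟩ := hpe
  have hcount : (m + m) / 2 + 4 = m + 4 := by omega
  have hN : ((m + m : ℕ) : ℚ) + 9 = 2 * (m + 4 : ℕ) + 1 := by push_cast; ring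
  have hlow (k : ℕ) : 1 + (k : ℚ) / (2 * (m + 4 : ℕ) + 1) - xbar
      = 3 / 2 + ((k : ℚ) / (2 * (m + 4 : ℕ) + 1) - 1 / 2) - xbar := by ring
  have hhigh (k : ℕ) : 2 - (k : ℚ) / (2 * (m + 4 : ℕ) + 1) - xbar
      = 3 / 2 - ((k : ℚ) / (2 * (m + 4 : ℕ) + 1) - 1 / 2) - xbar := by ring
  simp only [hcount, hN, hlow, hhigh]
  rw [add_assoc _ (∑ k ∈ Icc 1 (m + 4), _), sum_sq_center_add_add_sum_sq_center_sub,
    sum_Icc_div_sub_half_sq, Nat.card_Icc, add_tsub_cancel_right]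
  subst hτ hxbar
  push_cast
  rw [← sub_nonneg]
  field_simp
  ring_nf
  positivity

/-- Generalized Hertling inequality for the Tjurina spectrum of `U_{1,p}` (`p` even). -/
theorem stmt_19 (p : ℕ) (hp : 2 ≤ p) (hpe : Even p)
    (τ : ℚ) (hτ : τ = 13 + (p : ℚ))
    (xbar : ℚ) (hxbar : xbar = (340 + 27 * (p : ℚ)) / (234 + 18 * (p : ℚ))) :
    ((8/9 : ℚ) - xbar) ^ 2 + ((11/9 : ℚ) - xbar) ^ 2 + ((13/9 : ℚ) - xbar) ^ 2 +
      ((14/9 : ℚ) - xbar) ^ 2 + ((16/9 : ℚ) - xbar) ^ 2 +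
      ∑ k ∈ Finset.Icc 1 (p / 2 + 4),
        ((1 + (k : ℚ) / ((p : ℚ) + 9)) - xbar) ^ 2 +
      ∑ k ∈ Finset.Icc 1 (p / 2 + 4),
        ((2 - (k : ℚ) / ((p : ℚ) + 9)) - xbar) ^ 2
    ≤ (τ / 12) * ((2 - 1 / ((p : ℚ) + 9)) - 8/9) :=
  stmt_19_general p hpe τ hτ xbar hxbar
end
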